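/- The determinant of the Higgs field Ψ^u(z) = Σ_{k=1}^{4} Ψₖ/(z - zₖ) with poles at z₁=-1, z₂=0, z₃=1, z₄=∞ (taking the sum over the three finite poles with Ψ₄ omitted from the pole at infinity, i.e. Ψ^u(z) = Ψ₁/(z+1) + Ψ₂/z + Ψ₃/(z-1)) equals -(u - u³)/(z - z³). In particular, Ψ^u(z) is nilpotent for all z if and only if u ∈ {0, 1, -1}. -/

import Mathlib

/-!
Each residue Ψₖ is traceless, so Ψ^u(z) is traceless and, by Cayley–Hamilton for 2 × 2 matrices,
(Ψ^u(z))² = -det(Ψ^u(z)) • 1. Nilpotency is thus the vanishing of the determinant, which a direct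
computation gives as -(u - u³)/(z - z³), and u - u³ = u(1 - u)(1 + u).
-/

open Matrix

namespace Matrix

variable {R : Type*} [CommRing R]

theorem sq_fin_two_eq_trace_smul_sub_det_smul (A : Matrix (Fin 2) (Fin 2) R) :
    A ^ 2 = A.trace • A - A.det • (1 : Matrix (Fin 2) (Fin 2) R) := by
  ext i j
  fin_cases i <;> fin_cases j <;>
    simp only [Fin.zero_eta, Fin.mk_one, Fin.isValue, sq, mul_apply, Fin.sum_univ_two,
      trace_fin_two, det_fin_two, sub_apply, smul_apply, smul_eq_mul, one_apply_eq, one_apply_ne,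
      ne_eq, zero_ne_one, one_ne_zero, not_false_eq_true, mul_one, mul_zero, sub_zero] <;> ring

theorem sq_eq_zero_iff_det_eq_zero_of_trace_eq_zero [IsReduced R]
    {A : Matrix (Fin 2) (Fin 2) R} (htr : A.trace = 0) : A ^ 2 = 0 ↔ A.det = 0 := by
  refine ⟨fun h => eq_zero_of_pow_eq_zero (n := 2) ?_, fun h => ?_⟩
  · rw [← det_pow, h, det_zero]
  · rw [sq_fin_two_eq_trace_smul_sub_det_smul, htr, h, zero_smul, zero_smul, sub_zero]

end Matrix

theorem sub_pow_three_eq_zero_iff {R : Type*} [CommRing R] [NoZeroDivisors R] {x : R} :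
    x - x ^ 3 = 0 ↔ x = 0 ∨ x = 1 ∨ x = -1 := by
  have hfactor : x - x ^ 3 = x * ((1 - x) * (1 + x)) := by ring
  rw [hfactor, mul_eq_zero, mul_eq_zero, sub_eq_zero, eq_comm (a := (1 : R)),
    add_eq_zero_iff_neg_eq, eq_comm (a := -1)]

noncomputable def higgsField (u z : ℂ) : Matrix (Fin 2) (Fin 2) ℂ :=
  (z + 1)⁻¹ • !![-u, u ^ 2; -1, u] + z⁻¹ • !![0, 0; 1 - u, 0] + (z - 1)⁻¹ • !![u, -u; u, -u]

theorem trace_higgsField (u z : ℂ) : (higgsField u z).trace = 0 := by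
  simp only [higgsField, smul_of, smul_cons, smul_eq_mul, mul_neg, smul_empty, mul_one, mul_zero,
    of_add_of, add_cons, head_cons, add_zero, tail_cons, empty_add_empty, trace_fin_two, of_apply,
    cons_val', cons_val_zero, cons_val_fin_one, cons_val_one]
  ring

theorem det_higgsField {u z : ℂ} (hneg : z ≠ -1) (hzero : z ≠ 0) (hone : z ≠ 1) :
    (higgsField u z).det = -(u - u ^ 3) / (z - z ^ 3) := by
  have hp : z + 1 ≠ 0 := by rwa [ne_eq, add_eq_zero_iff_eq_neg]
  have hm : z - 1 ≠ 0 := sub_ne_zero.mpr hone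
  have hz : z - z ^ 3 ≠ 0 := by
    rw [ne_eq, sub_pow_three_eq_zero_iff]; tauto
  rw [eq_div_iff hz]
  simp only [higgsField, smul_of, smul_cons, smul_eq_mul, mul_neg, smul_empty, mul_one, mul_zero,
    of_add_of, add_cons, head_cons, add_zero, tail_cons, empty_add_empty, det_fin_two, of_apply,
    cons_val', cons_val_zero, cons_val_fin_one, cons_val_one]
  field_simp
  ring

theorem det_higgs_field (u : ℂ)
    (Ψ : ℂ → Matrix (Fin 2) (Fin 2) ℂ)
    (hΨ : ∀ z : ℂ, Ψ z =
      (z + 1)⁻¹ • !![-u, u ^ 2; -1, u] + z⁻¹ • !![0, 0; 1 - u, 0] +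
        (z - 1)⁻¹ • !![u, -u; u, -u]) :
    (∀ z : ℂ, z ≠ -1 → z ≠ 0 → z ≠ 1 →
      (Ψ z).det = -(u - u ^ 3) / (z - z ^ 3)) ∧
    ((∀ z : ℂ, z ≠ -1 → z ≠ 0 → z ≠ 1 → (Ψ z) ^ 2 = 0) ↔
      (u = 0 ∨ u = 1 ∨ u = -1)) := by
  obtain rfl : Ψ = higgsField u := funext hΨ
  have hnilp : ∀ z : ℂ, higgsField u z ^ 2 = 0 ↔ (higgsField u z).det = 0 := fun z =>
    sq_eq_zero_iff_det_eq_zero_of_trace_eq_zero (trace_higgsField u z)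
  refine ⟨fun z => det_higgsField, fun h => ?_, fun hu z hneg hzero hone => ?_⟩
  · have hdet := (hnilp 2).mp (h 2 (by norm_num) two_ne_zero (by norm_num))
    rw [det_higgsField (by norm_num) two_ne_zero (by norm_num), div_eq_zero_iff, neg_eq_zero]
      at hdet
    exact sub_pow_three_eq_zero_iff.mp (hdet.resolve_right (by norm_num))
  · rw [hnilp, det_higgsField hneg hzero hone, sub_pow_three_eq_zero_iff.mpr hu, neg_zero,
      zero_div]
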